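/- arXiv:1003.2951 — 4 statements merged into one kernel-verified Lean document; each statement's English description precedes it below -/
import Mathlib

section
/- Let I ⊆ S be a saturated Borel ideal, ≺ any term order, and p > q positive integers. If I ∩ 𝕋_p is a segment with respect to ≺, then I ∩ 𝕋_q is a segment with respect to ≺. -/
open Polynomial

/-- Exponent vectors of monomials (terms) of `S = K[x_0, …, x_n]`. -/
abbrev Expo (n : ℕ) := Fin (n + 1) → ℕ

/-- The degree of a term. -/
def deg {n : ℕ} (α : Expo n) : ℕ := ∑ i, α i

/-- The exponent vector of the variable `x_i`. -/
def sing {n : ℕ} (i : Fin (n + 1)) : Expo n := Pi.single i 1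

/-- `MoveDown α β` : the term `α` is obtained from `β` by an elementary move `e_j^-`,
i.e. `α = x_{j-1}·β/x_j` for some `j ≥ 1` with `β_j > 0`. -/
def MoveDown {n : ℕ} (α β : Expo n) : Prop :=
  ∃ j k : Fin (n + 1), (k : ℕ) + 1 = (j : ℕ) ∧ α + sing j = β + sing k

/-- The Borel (partial) order `α <_B β` : transitive closure of elementary moves `e_j^-`. -/
def BorelLt {n : ℕ} (α β : Expo n) : Prop := Relation.TransGen MoveDown α β

/-- A Borel set: a set of terms closed upwards under the Borel order. -/
def IsBorelSet {n : ℕ} (B : Set (Expo n)) : Prop :=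
  ∀ α β : Expo n, α ∈ B → MoveDown α β → β ∈ B

/-- A monomial ideal, identified with its set of terms: closed under multiplication
by arbitrary terms. -/
def IsMonIdeal {n : ℕ} (M : Set (Expo n)) : Prop :=
  ∀ α ∈ M, ∀ γ : Expo n, α + γ ∈ M

/-- A Borel ideal: a monomial ideal which is a Borel set in every degree. -/
def IsBorelIdeal {n : ℕ} (M : Set (Expo n)) : Prop :=
  IsMonIdeal M ∧ IsBorelSet M

/-- `𝒩(M)_t` : the set of degree-`t` terms not lying in `M`. -/
def coIdeal {n : ℕ} (M : Set (Expo n)) (t : ℕ) : Set (Expo n) :=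
  {α | deg α = t ∧ α ∉ M}

/-- `p` is the Hilbert polynomial of `S/M` : `|𝒩(M)_t| = p(t)` for all `t` large. -/
def HasHilbPoly {n : ℕ} (M : Set (Expo n)) (p : Polynomial ℚ) : Prop :=
  ∃ N : ℕ, ∀ t : ℕ, N ≤ t → ((coIdeal M t).ncard : ℚ) = p.eval (t : ℚ)

/-- Saturation for monomial ideals: a term `α` with `x_i^{k_i}·α ∈ M` for suitable
powers of every variable already lies in `M`. -/
def IsSaturatedIdeal {n : ℕ} (M : Set (Expo n)) : Prop :=
  ∀ α : Expo n, (∀ i : Fin (n + 1), ∃ k : ℕ, α + k • sing i ∈ M) → α ∈ M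

/-- A term order on the terms of `S`: a multiplicative (strict) total order with `1`
as least element and `x_0 ≺ x_1 ≺ … ≺ x_n`. -/
structure TermOrder (n : ℕ) where
  lt : Expo n → Expo n → Prop
  irrefl : ∀ a : Expo n, ¬ lt a a
  trans : ∀ a b c : Expo n, lt a b → lt b c → lt a c
  total : ∀ a b : Expo n, a ≠ b → lt a b ∨ lt b a
  add_right : ∀ a b c : Expo n, lt a b → lt (a + c) (b + c)
  zero_lt : ∀ a : Expo n, a ≠ 0 → lt 0 a
  var_lt : ∀ i j : Fin (n + 1), i < j → lt (sing i) (sing j)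

/-- `M ∩ 𝕋_t` is a segment w.r.t. the order `lt`. -/
def IsSegmentAt {n : ℕ} (lt : Expo n → Expo n → Prop) (M : Set (Expo n)) (t : ℕ) : Prop :=
  ∀ τ σ : Expo n, τ ∈ M → deg τ = t → deg σ = t → lt τ σ → σ ∈ M

/-- `M` is a segment ideal w.r.t. the order `lt`. -/
def IsSegmentIdeal {n : ℕ} (lt : Expo n → Expo n → Prop) (M : Set (Expo n)) : Prop :=
  ∀ t : ℕ, IsSegmentAt lt M t

/-- `α` is a minimal monomial generator of the monomial ideal `M`. -/
def IsMinGen {n : ℕ} (M : Set (Expo n)) (α : Expo n) : Prop :=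
  α ∈ M ∧ ∀ β γ : Expo n, β + γ = α → β ∈ M → γ = 0

/-- The ideal generated by the elements of `M` of degree `≤ s - 1`. -/
def genBelow {n : ℕ} (M : Set (Expo n)) (s : ℕ) : Set (Expo n) :=
  {x | ∃ α γ : Expo n, α ∈ M ∧ deg α < s ∧ x = α + γ}

/-- `M` is a gen-segment ideal w.r.t. `lt`: for every `s` the minimal generators of
degree `s` are the greatest among the degree-`s` terms not in `⟨M_{≤ s-1}⟩`. -/
def IsGenSegment {n : ℕ} (lt : Expo n → Expo n → Prop) (M : Set (Expo n)) : Prop :=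
  ∀ α : Expo n, IsMinGen M α → ∀ σ : Expo n, deg σ = deg α →
    σ ∉ genBelow M (deg α) → ¬ IsMinGen M σ → lt σ α

/-- `δ` is the maximal degree of a minimal monomial generator of `M`. -/
def IsMaxGenDeg {n : ℕ} (M : Set (Expo n)) (δ : ℕ) : Prop :=
  (∃ α : Expo n, IsMinGen M α ∧ deg α = δ) ∧ ∀ α : Expo n, IsMinGen M α → deg α ≤ δ

/-- `p` is an admissible polynomial with Gotzmann decomposition of length `r`
(so `r` is its Gotzmann number):
`p(z) = ∑_{i=1}^{r} binom(z + a_i - (i-1), a_i)` with `a_1 ≥ … ≥ a_r ≥ 0`. -/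
def IsGotzmannDecomp (p : Polynomial ℚ) (r : ℕ) : Prop :=
  ∃ a : Fin r → ℕ, Antitone a ∧
    ∀ t : ℕ, r ≤ t →
      p.eval (t : ℚ) = ∑ i : Fin r, ((t + a i - (i : ℕ)).choose (a i) : ℚ)

/-- An admissible polynomial: one admitting a Gotzmann decomposition. -/
def IsAdmissible (p : Polynomial ℚ) : Prop := ∃ r : ℕ, IsGotzmannDecomp p r

/-- Setting `x_0 = x_1 = 1` in a term. -/
def trunc01 {n : ℕ} (α : Expo n) : Expo n := fun i => if (i : ℕ) ≤ 1 then 0 else α i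

/-- The `x_1`-saturation of a monomial ideal: the ideal generated by the minimal
generators with `x_0 = x_1 = 1`. -/
def xOneSat {n : ℕ} (M : Set (Expo n)) : Set (Expo n) :=
  {x | ∃ α γ : Expo n, IsMinGen M α ∧ x = trunc01 α + γ}

/-- The lexicographic comparison (intended for terms of equal degree):
`α ≺_lex β` iff `α_k < β_k` at the largest index `k` where they differ. -/
def LexLt {n : ℕ} (α β : Expo n) : Prop :=
  ∃ k : Fin (n + 1), α k < β k ∧ ∀ j : Fin (n + 1), k < j → α j = β j

/-- The reverse lexicographic comparison (intended for terms of equal degree):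
`α ≺_revlex β` iff `α_h > β_h` at the smallest index `h` where they differ. -/
def RevLexLt {n : ℕ} (α β : Expo n) : Prop :=
  ∃ h : Fin (n + 1), β h < α h ∧ ∀ j : Fin (n + 1), j < h → α j = β j

/-- A graded term order. -/
def IsGraded {n : ℕ} (ord : TermOrder n) : Prop :=
  ∀ α β : Expo n, deg α < deg β → ord.lt α β

/-- A reverse term order: a graded term order such that, on terms of equal degree,
a strictly larger exponent of `x_0` makes a term strictly smaller. -/
def IsReverseOrder {n : ℕ} (ord : TermOrder n) : Prop :=
  IsGraded ord ∧ ∀ α β : Expo n, deg α = deg β → β 0 < α 0 → ord.lt α β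

/-!
Multiplication by `x_0^{p-q}` maps `𝕋_q` into `𝕋_p` and preserves `≺`, so if `τ ≺ σ` in degree `q`
with `τ ∈ I`, the segment property in degree `p` puts `x_0^{p-q}·σ` in `I`. For a saturated Borel
ideal `x_0` is a non-zero-divisor modulo `I`: Borel moves turn `x_0^m·σ ∈ I` into `x_i^m·σ ∈ I` for
every `i`, and saturation then gives `σ ∈ I`.
-/

lemma deg_add {n : ℕ} (α β : Expo n) : deg (α + β) = deg α + deg β := by
  simp [deg, Finset.sum_add_distrib]

lemma deg_nsmul_sing {n : ℕ} (m : ℕ) (i : Fin (n + 1)) : deg (m • sing i) = m := by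
  simp [deg, sing, Pi.single_apply]

namespace IsBorelSet

variable {n : ℕ} {B : Set (Expo n)}

lemma add_sing_mem (hB : IsBorelSet B) {β : Expo n} (h0 : β + sing 0 ∈ B) (i : Fin (n + 1)) :
    β + sing i ∈ B := by
  induction i using Fin.induction with
  | zero => exact h0
  | succ i ih => exact hB _ _ ih ⟨i.succ, i.castSucc, by simp, by abel⟩

lemma add_nsmul_sing_mem (hB : IsBorelSet B) {m : ℕ} {σ : Expo n} (h0 : σ + m • sing 0 ∈ B)
    (i : Fin (n + 1)) : σ + m • sing i ∈ B := by
  induction m generalizing σ with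
  | zero => simpa using h0
  | succ m ih =>
    have hσ : (σ + sing 0) + m • sing 0 ∈ B := by rwa [succ_nsmul', ← add_assoc] at h0
    have hσi : (σ + m • sing i) + sing 0 ∈ B := by
      rw [add_right_comm]; exact ih hσ
    rw [succ_nsmul, ← add_assoc]
    exact hB.add_sing_mem hσi i

end IsBorelSet

lemma IsBorelIdeal.mem_of_add_nsmul_sing_zero_mem {n : ℕ} {I : Set (Expo n)}
    (hI : IsBorelIdeal I) (hsat : IsSaturatedIdeal I) {σ : Expo n} {m : ℕ}
    (h : σ + m • sing 0 ∈ I) : σ ∈ I :=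
  hsat σ fun i => ⟨m, hI.2.add_nsmul_sing_mem h i⟩

theorem segment_descends_general {n : ℕ} (I : Set (Expo n)) (hI : IsBorelIdeal I)
    (hsat : IsSaturatedIdeal I) (ord : TermOrder n)
    (p q : ℕ) (hpq : q < p)
    (hseg : IsSegmentAt ord.lt I p) :
    IsSegmentAt ord.lt I q := by
  intro τ σ hτ hdτ hdσ hlt
  have hlift : ∀ α : Expo n, deg α = q → deg (α + (p - q) • sing 0) = p := fun α hα => by
    rw [deg_add, hα, deg_nsmul_sing]; omega
  have hσ : σ + (p - q) • sing 0 ∈ I :=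
    hseg _ _ (hI.1 τ hτ _) (hlift τ hdτ) (hlift σ hdσ) (ord.add_right _ _ _ hlt)
  exact hI.mem_of_add_nsmul_sing_zero_mem hsat hσ

/-- If `I` is a saturated Borel ideal, `≺` a term order and `p > q` positive
integers such that `I ∩ 𝕋_p` is a segment, then `I ∩ 𝕋_q` is a segment. -/
theorem segment_descends {n : ℕ} (I : Set (Expo n)) (hI : IsBorelIdeal I)
    (hsat : IsSaturatedIdeal I) (ord : TermOrder n)
    (p q : ℕ) (hq : 0 < q) (hpq : q < p)
    (hseg : IsSegmentAt ord.lt I p) :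
    IsSegmentAt ord.lt I q :=
  segment_descends_general I hI hsat ord p q hpq hseg
end

section
/- Let J ⊆ S be a monomial ideal and suppose there exist an integer t and four terms x^α, x^β ∈ 𝒩(J)_t and x^γ, x^δ ∈ J ∩ 𝕋_t with x^{α+β} = x^{γ+δ}. Then for no term order ≺ is J a segment ideal with respect to ≺. -/
open Polynomial

/-! A segment places every degree-`t` term outside `J` below every degree-`t` term of `J`,
so `α ≺ γ` and `β ≺ δ`; multiplying gives `α + β ≺ γ + δ`, which contradicts `α + β = γ + δ`. -/

namespace TermOrder

variable {n : ℕ} (ord : TermOrder n)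

theorem add_lt_add {a b c d : Expo n} (hab : ord.lt a b) (hcd : ord.lt c d) :
    ord.lt (a + c) (b + d) := by
  have hac : ord.lt (a + c) (b + c) := ord.add_right a b c hab
  have hcd' : ord.lt (b + c) (b + d) := by
    simpa only [add_comm b] using ord.add_right c d b hcd
  exact ord.trans _ _ _ hac hcd'

theorem lt_of_isSegmentAt {M : Set (Expo n)} {t : ℕ} (hM : IsSegmentAt ord.lt M t)
    {σ τ : Expo n} (hσ : deg σ = t) (hτ : deg τ = t) (hσM : σ ∉ M) (hτM : τ ∈ M) :
    ord.lt σ τ :=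
  (ord.total σ τ (by rintro rfl; exact hσM hτM)).resolve_right
    fun hτσ => hσM (hM τ σ hτM hτ hσ hτσ)

end TermOrder

theorem not_segment_criterion_general {n : ℕ} (J : Set (Expo n))
    (t : ℕ) (α β γ δ : Expo n)
    (hα : deg α = t) (hβ : deg β = t) (hγ : deg γ = t) (hδ : deg δ = t)
    (hαJ : α ∉ J) (hβJ : β ∉ J) (hγJ : γ ∈ J) (hδJ : δ ∈ J)
    (heq : α + β = γ + δ) :
    ∀ ord : TermOrder n, ¬ IsSegmentIdeal ord.lt J := by
  intro ord hseg
  have hαγ : ord.lt α γ := ord.lt_of_isSegmentAt (hseg t) hα hγ hαJ hγJ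
  have hβδ : ord.lt β δ := ord.lt_of_isSegmentAt (hseg t) hβ hδ hβJ hδJ
  have hlt : ord.lt (α + β) (γ + δ) := ord.add_lt_add hαγ hβδ
  exact ord.irrefl _ (heq ▸ hlt)

/-- If a monomial ideal `J` admits a degree `t` with terms
`x^α, x^β ∈ 𝒩(J)_t`, `x^γ, x^δ ∈ J ∩ 𝕋_t` and `x^{α+β} = x^{γ+δ}`, then `J` is not
a segment ideal with respect to any term order. -/
theorem not_segment_criterion {n : ℕ} (J : Set (Expo n)) (hJ : IsMonIdeal J)
    (t : ℕ) (α β γ δ : Expo n)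
    (hα : deg α = t) (hβ : deg β = t) (hγ : deg γ = t) (hδ : deg δ = t)
    (hαJ : α ∉ J) (hβJ : β ∉ J) (hγJ : γ ∈ J) (hδJ : δ ∈ J)
    (heq : α + β = γ + δ) :
    ∀ ord : TermOrder n, ¬ IsSegmentIdeal ord.lt J :=
  not_segment_criterion_general J t α β γ δ hα hβ hγ hδ hαJ hβJ hγJ hδJ heq
end

section
/- For every integer d ≥ 7 there exists a saturated Borel ideal I ⊆ K[x_0,x_1,x_2] whose Hilbert polynomial is the constant polynomial d and which is not a hilb-segment ideal for any term order; that is, for no term order ≺ is I ∩ 𝕋_d a segment with respect to ≺ (here d is the Gotzmann number of the constant polynomial d). -/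
open Polynomial

/-!
The ideals used are `I = (x_1^{c 0}, x_1^{c 1} x_2, x_1^{c 2} x_2^2, …)` for a staircase `c`
that decreases strictly until it vanishes. Since `x_0` does not occur, `I` is saturated; the
staircase condition makes it Borel; and in large degree its standard terms are
`x_0^{t-a-b} x_1^a x_2^b` with `a < c b`, so its Hilbert polynomial is `∑ c`.

No term order makes `I_d` a segment as soon as `σ₁ σ₂ = τ₁ τ₂` with `σᵢ ∉ I`, `τᵢ ∈ I` of
degree `d`: a segment forces `σᵢ ≺ τᵢ`, whence `σ₁ σ₂ ≺ τ₁ σ₂ ≺ τ₁ τ₂` by multiplicativity.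
For `d = 7` take `c = (4, 3)`, for `d ≥ 8` take `c = (d - 3, 2, 1)`.
-/

theorem deg_expo_two (α : Expo 2) : deg α = α 0 + α 1 + α 2 :=
  Fin.sum_univ_three α

/-- For antitone `c`, the monomial ideal `(x_1^{c 0}, x_1^{c 1} x_2, x_1^{c 2} x_2^2, …)`. -/
def stairIdeal (c : ℕ → ℕ) : Set (Expo 2) := {α | c (α 2) ≤ α 1}

section stairIdeal

variable {c : ℕ → ℕ}

theorem isMonIdeal_stairIdeal (hc : Antitone c) : IsMonIdeal (stairIdeal c) := by
  intro α (hα : c (α 2) ≤ α 1) γ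
  show c (α 2 + γ 2) ≤ α 1 + γ 1
  have := hc (Nat.le_add_right (α 2) (γ 2))
  omega

theorem antitone_of_succ_eq_zero_or_lt (hc : ∀ k, c (k + 1) = 0 ∨ c (k + 1) < c k) :
    Antitone c :=
  antitone_nat_of_succ_le fun k => by rcases hc k with h | h <;> omega

theorem isBorelIdeal_stairIdeal (hc : ∀ k, c (k + 1) = 0 ∨ c (k + 1) < c k) :
    IsBorelIdeal (stairIdeal c) := by
  refine ⟨isMonIdeal_stairIdeal (antitone_of_succ_eq_zero_or_lt hc), ?_⟩
  rintro α β (hα : c (α 2) ≤ α 1) ⟨j, k, hjk, hmove⟩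
  show c (β 2) ≤ β 1
  obtain ⟨rfl, rfl⟩ | ⟨rfl, rfl⟩ : j = 1 ∧ k = 0 ∨ j = 2 ∧ k = 1 := by
    clear hmove
    decide +revert
  all_goals
    have h1 := congrFun hmove 1
    have h2 := congrFun hmove 2
    simp only [sing, Pi.add_apply, Pi.single_eq_same, Pi.single_eq_of_ne, ne_eq, Fin.reduceEq,
      not_false_eq_true, add_zero] at h1 h2
    rw [← h2]
  · omega
  · obtain h | h := hc (α 2) <;> omega

theorem isSaturatedIdeal_stairIdeal (c : ℕ → ℕ) : IsSaturatedIdeal (stairIdeal c) := by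
  intro α h
  obtain ⟨k, hk⟩ := h 0
  simpa [stairIdeal, sing, Pi.single_apply] using hk

theorem coIdeal_stairIdeal (hc : Antitone c) {m : ℕ} (hm : ∀ k, m ≤ k → c k = 0) {t : ℕ}
    (ht : c 0 + m ≤ t) :
    coIdeal (stairIdeal c) t = (fun p : Σ _ : ℕ, ℕ => ![t - p.2 - p.1, p.2, p.1]) ''
      ↑((Finset.range m).sigma fun b => Finset.range (c b)) := by
  ext α
  simp only [coIdeal, stairIdeal, deg_expo_two, Set.mem_ofPred_eq, Set.mem_image,
    Finset.coe_sigma, Set.mem_sigma_iff, Finset.coe_range, Set.mem_Iio, not_le]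
  constructor
  · rintro ⟨hdeg, hα⟩
    have hm : α 2 < m := by
      by_contra! h
      simp [hm _ h] at hα
    refine ⟨⟨α 2, α 1⟩, ⟨hm, hα⟩, ?_⟩
    ext i
    fin_cases i
    · show t - α 1 - α 2 = α 0
      omega
    · rfl
    · rfl
  · rintro ⟨⟨b, a⟩, ⟨hb : b < m, ha : a < c b⟩, rfl⟩
    have := hc (Nat.zero_le b)
    simp only [Matrix.cons_val_zero, Matrix.cons_val_one, Matrix.cons_val]
    omega

theorem hasHilbPoly_stairIdeal (hc : Antitone c) (m : ℕ) (hm : ∀ k, m ≤ k → c k = 0) {d : ℕ}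
    (hd : ∑ k ∈ Finset.range m, c k = d) : HasHilbPoly (stairIdeal c) (C (d : ℚ)) := by
  refine ⟨c 0 + m, fun t ht => ?_⟩
  rw [coIdeal_stairIdeal hc hm ht, Set.InjOn.ncard_image, Set.ncard_coe_finset,
    Finset.card_sigma]
  · simp [hd]
  · rintro ⟨b, a⟩ - ⟨b', a'⟩ - h
    have ha := congrFun h 1
    have hb := congrFun h 2
    simp_all

end stairIdeal

theorem not_isSegmentAt_of_add_eq {n t : ℕ} (ord : TermOrder n) {I : Set (Expo n)}
    {σ₁ σ₂ τ₁ τ₂ : Expo n} (hσ₁ : σ₁ ∉ I) (hσ₂ : σ₂ ∉ I) (hτ₁ : τ₁ ∈ I) (hτ₂ : τ₂ ∈ I)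
    (hdσ₁ : deg σ₁ = t) (hdσ₂ : deg σ₂ = t) (hdτ₁ : deg τ₁ = t) (hdτ₂ : deg τ₂ = t)
    (hadd : σ₁ + σ₂ = τ₁ + τ₂) : ¬ IsSegmentAt ord.lt I t := by
  intro hseg
  have lt_of_not_mem {σ τ : Expo n} (hσ : σ ∉ I) (hτ : τ ∈ I) (hdσ : deg σ = t)
      (hdτ : deg τ = t) : ord.lt σ τ :=
    (ord.total σ τ fun h => hσ (h ▸ hτ)).resolve_right fun h => hσ (hseg τ σ hτ hdτ hdσ h)
  have h₁ : ord.lt (σ₁ + σ₂) (τ₁ + σ₂) := ord.add_right _ _ _ (lt_of_not_mem hσ₁ hτ₁ hdσ₁ hdτ₁)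
  have h₂ : ord.lt (τ₁ + σ₂) (τ₁ + τ₂) := by
    simpa only [add_comm τ₁] using ord.add_right _ _ τ₁ (lt_of_not_mem hσ₂ hτ₂ hdσ₂ hdτ₂)
  exact ord.irrefl _ (hadd ▸ ord.trans _ _ _ h₁ h₂)

/-- For every `d ≥ 7` there is a saturated Borel ideal of `K[x_0,x_1,x_2]`
with constant Hilbert polynomial `d` which is not a hilb-segment ideal for any term order
(the Gotzmann number of the constant polynomial `d` being `d`). -/
theorem large_degree_not_hilb_segment (d : ℕ) (hd : 7 ≤ d) :
    ∃ I : Set (Expo 2), IsBorelIdeal I ∧ IsSaturatedIdeal I ∧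
      HasHilbPoly I (Polynomial.C (d : ℚ)) ∧
      ∀ ord : TermOrder 2, ¬ IsSegmentAt ord.lt I d := by
  obtain rfl | hd := hd.eq_or_lt
  · -- `(x_0^4 x_1^2 x_2)^2 = (x_0^3 x_1^4)(x_0^5 x_2^2)`
    have hc (k : ℕ) :
        [4, 3].getD (k + 1) 0 = 0 ∨ [4, 3].getD (k + 1) 0 < [4, 3].getD k 0 := by
      rcases k with _ | _ | k <;> simp
    refine ⟨stairIdeal ([4, 3].getD · 0), isBorelIdeal_stairIdeal hc,
      isSaturatedIdeal_stairIdeal _,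
      hasHilbPoly_stairIdeal (antitone_of_succ_eq_zero_or_lt hc) 2
        (fun k hk => List.getD_eq_default _ _ hk) (by simp [Finset.sum_range_succ]),
      fun ord => not_isSegmentAt_of_add_eq ord (σ₁ := ![4, 2, 1]) (σ₂ := ![4, 2, 1])
        (τ₁ := ![3, 4, 0]) (τ₂ := ![5, 0, 2]) ?_ ?_ ?_ ?_ ?_ ?_ ?_ ?_ ?_⟩
    all_goals simp [stairIdeal, deg_expo_two]
  · -- `(x_0^4 x_1^{d-4})(x_0^{d-2} x_2^2) = (x_0^{d-3} x_1^2 x_2)(x_0^5 x_1^{d-6} x_2)`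
    have hc (k : ℕ) : [d - 3, 2, 1].getD (k + 1) 0 = 0 ∨
        [d - 3, 2, 1].getD (k + 1) 0 < [d - 3, 2, 1].getD k 0 := by
      rcases k with _ | _ | _ | k <;> simp
      omega
    refine ⟨stairIdeal ([d - 3, 2, 1].getD · 0), isBorelIdeal_stairIdeal hc,
      isSaturatedIdeal_stairIdeal _,
      hasHilbPoly_stairIdeal (antitone_of_succ_eq_zero_or_lt hc) 3
        (fun k hk => List.getD_eq_default _ _ hk) (by simp [Finset.sum_range_succ]; omega),
      fun ord => not_isSegmentAt_of_add_eq ord (σ₁ := ![4, d - 4, 0]) (σ₂ := ![d - 2, 0, 2])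
        (τ₁ := ![d - 3, 2, 1]) (τ₂ := ![5, d - 6, 1]) ?_ ?_ ?_ ?_ ?_ ?_ ?_ ?_ ?_⟩
    all_goals simp [stairIdeal, deg_expo_two] <;> omega
end

section
/- Let p(z) = dz + 1 − g be an admissible polynomial (equivalently, d ≥ 1 and g ≤ (d−1)(d−2)/2). Then there exist integers n ≥ 2 and j > 0 such that binom(j−1+n, n) ≤ p(j−1) and p(j+h) < binom(j+h+n, n) for every integer h ≥ 0 (in fact n = 2 and some j with d ≤ j ≤ r work, where r = binom(d,2)+1−g is the Gotzmann number of p). -/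
open Polynomial

/-! Take `j - 1` to be the last degree `t` in which `p(t) = d t + 1 - g` still dominates the
Hilbert function `binom(t + 2, 2)` of the plane: this set of degrees contains `d - 1` by the genus
bound and is finite since `binom(t + 2, 2) - p(t)` is quadratic in `t`. Past it, `p` stays strictly
below `binom(t + 2, 2)`, and the inequality in degree `j - 1` forces `j ≤ r`. -/

lemma two_mul_choose_two_eq (n : ℕ) : 2 * (n.choose 2 : ℤ) = n * (n - 1) := by
  have h := Nat.cast_choose_two ℚ n
  qify
  rw [h]
  ring

def PlaneHilbLE (d : ℕ) (g : ℤ) (t : ℕ) : Prop :=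
  (((t + 2).choose 2 : ℕ) : ℤ) ≤ d * t + 1 - g

section PlaneHilbLE

variable {d : ℕ} {g : ℤ} {t : ℕ}

lemma planeHilbLE_pred (hd : 1 ≤ d) (hg : 2 * g ≤ ((d : ℤ) - 1) * ((d : ℤ) - 2)) :
    PlaneHilbLE d g (d - 1) := by
  have h := two_mul_choose_two_eq (d - 1 + 2)
  unfold PlaneHilbLE
  push_cast [hd] at h ⊢
  nlinarith

lemma not_planeHilbLE_of_lt (ht : 2 * (d + g.natAbs) < t) : ¬ PlaneHilbLE d g t := by
  have h := two_mul_choose_two_eq (t + 2)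
  have ht' : 2 * ((d : ℤ) + |g|) < t := by rw [Int.abs_eq_natAbs]; exact_mod_cast ht
  unfold PlaneHilbLE
  push_cast at h
  nlinarith [mul_le_mul_of_nonneg_right ht'.le (Int.natCast_nonneg t), neg_abs_le g, abs_nonneg g]

lemma bddAbove_planeHilbLE : BddAbove {t | PlaneHilbLE d g t} :=
  ⟨2 * (d + g.natAbs), fun _ ht => not_lt.1 fun hlt => not_planeHilbLE_of_lt hlt ht⟩

/-- The bound reduces to `(t - d) (t - d + 1) ≥ 0`, true for every integer `t`. -/
lemma succ_le_gotzmann_of_planeHilbLE (ht : PlaneHilbLE d g t) :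
    (t + 1 : ℤ) ≤ d.choose 2 + 1 - g := by
  have h := two_mul_choose_two_eq (t + 2)
  have hdc := two_mul_choose_two_eq d
  have hcons : 0 ≤ ((t : ℤ) - d) * ((t : ℤ) - d + 1) := by
    rcases le_or_gt 0 ((t : ℤ) - d) with h0 | h0 <;> nlinarith
  unfold PlaneHilbLE at ht
  push_cast at h
  nlinarith

end PlaneHilbLE

/-- For an admissible polynomial `p(z) = dz + 1 - g` (`d ≥ 1`,
`g ≤ (d-1)(d-2)/2`) with Gotzmann number `r = binom(d,2) + 1 - g`, there exist `n ≥ 2`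
and `j > 0` with `binom(j-1+n, n) ≤ p(j-1)` and `p(j+h) < binom(j+h+n, n)` for all
`h ≥ 0`; in fact `n = 2` and some `j` with `d ≤ j ≤ r` work. -/
theorem exists_j_for_plane (d : ℕ) (hd : 1 ≤ d) (g : ℤ)
    (hg : 2 * g ≤ ((d : ℤ) - 1) * ((d : ℤ) - 2))
    (r : ℤ) (hr : r = (d.choose 2 : ℤ) + 1 - g) :
    ∃ j : ℕ, 0 < j ∧ d ≤ j ∧ (j : ℤ) ≤ r ∧
      (((j + 1).choose 2 : ℤ)) ≤ (d : ℤ) * ((j : ℤ) - 1) + 1 - g ∧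
      ∀ h : ℕ, (d : ℤ) * ((j : ℤ) + (h : ℤ)) + 1 - g < ((j + h + 2).choose 2 : ℤ) := by
  set t := sSup {t | PlaneHilbLE d g t}
  have hpred := planeHilbLE_pred hd hg
  have ht : PlaneHilbLE d g t := Nat.sSup_mem ⟨_, hpred⟩ bddAbove_planeHilbLE
  have hdt : d - 1 ≤ t := le_csSup bddAbove_planeHilbLE hpred
  have hlast : ∀ k, t < k → ¬ PlaneHilbLE d g k :=
    fun k hk hk' => (le_csSup bddAbove_planeHilbLE hk').not_gt hk
  refine ⟨t + 1, t.succ_pos, by omega, hr ▸ succ_le_gotzmann_of_planeHilbLE ht, ?_, fun h => ?_⟩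
  · simpa [PlaneHilbLE] using ht
  · have := hlast (t + 1 + h) (by omega)
    simp only [PlaneHilbLE, not_le] at this
    push_cast at this ⊢
    exact this
end
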